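/- arXiv:1003.1220 — 5 statements merged into one kernel-verified Lean document; each statement's English description precedes it below -/
import Mathlib

section
/- Let C (data c, t, n₁, n₂, n₃, k₁, k₂, k₃) and C̄ (data c̄, t̄, n̄₁, n̄₂, n̄₃, k̄₁, k̄₂, k̄₃) be C∞-special timelike Frenet curves in E⁴₂, let φ : ℝ → ℝ be smooth with φ'(s) ≠ 0 for all s, and let α : ℝ → ℝ be a smooth function such that c̄(φ(s)) = c(s) + α(s)·n₁(s) and n̄₁(φ(s)) is a scalar multiple of n₁(s) for all s. Then α'(s) = 0 for all s, i.e. α is a constant function. -/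
noncomputable section

/-- The indefinite metric of semi-Euclidean space `E⁴₂`:
`g(v,w) = -v₁w₁ - v₂w₂ + v₃w₃ + v₄w₄`. -/
def g4 (v w : Fin 4 → ℝ) : ℝ :=
  -(v 0 * w 0) - v 1 * w 1 + v 2 * w 2 + v 3 * w 3

/-- The semi-Euclidean norm `‖v‖ = √|g(v,v)|` in `E⁴₂`. -/
def nrm4 (v : Fin 4 → ℝ) : ℝ := Real.sqrt |g4 v v|

/-- A `C^∞`-special timelike Frenet curve in `E⁴₂`: a unit-speed timelike curve
with Frenet frame `t, n₁, n₂, n₃` (with `t, n₁` timelike and `n₂, n₃` spacelike)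
and nowhere-vanishing curvatures `k₁, k₂, k₃` satisfying the Frenet equations
`t' = -k₁·n₁`, `n₁' = k₁·t + k₂·n₂`, `n₂' = k₂·n₁ + k₃·n₃`, `n₃' = -k₃·n₂`. -/
structure TimelikeFrenetE42 where
  c : ℝ → Fin 4 → ℝ
  t : ℝ → Fin 4 → ℝ
  n1 : ℝ → Fin 4 → ℝ
  n2 : ℝ → Fin 4 → ℝ
  n3 : ℝ → Fin 4 → ℝ
  k1 : ℝ → ℝ
  k2 : ℝ → ℝ
  k3 : ℝ → ℝ
  smooth_c : ContDiff ℝ (⊤ : ℕ∞) c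
  smooth_t : ContDiff ℝ (⊤ : ℕ∞) t
  smooth_n1 : ContDiff ℝ (⊤ : ℕ∞) n1
  smooth_n2 : ContDiff ℝ (⊤ : ℕ∞) n2
  smooth_n3 : ContDiff ℝ (⊤ : ℕ∞) n3
  smooth_k1 : ContDiff ℝ (⊤ : ℕ∞) k1
  smooth_k2 : ContDiff ℝ (⊤ : ℕ∞) k2
  smooth_k3 : ContDiff ℝ (⊤ : ℕ∞) k3
  deriv_c : ∀ s, HasDerivAt c (t s) s
  unit_t : ∀ s, g4 (t s) (t s) = -1
  unit_n1 : ∀ s, g4 (n1 s) (n1 s) = -1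
  unit_n2 : ∀ s, g4 (n2 s) (n2 s) = 1
  unit_n3 : ∀ s, g4 (n3 s) (n3 s) = 1
  orth_t_n1 : ∀ s, g4 (t s) (n1 s) = 0
  orth_t_n2 : ∀ s, g4 (t s) (n2 s) = 0
  orth_t_n3 : ∀ s, g4 (t s) (n3 s) = 0
  orth_n1_n2 : ∀ s, g4 (n1 s) (n2 s) = 0
  orth_n1_n3 : ∀ s, g4 (n1 s) (n3 s) = 0
  orth_n2_n3 : ∀ s, g4 (n2 s) (n3 s) = 0
  k1_ne : ∀ s, k1 s ≠ 0
  k2_ne : ∀ s, k2 s ≠ 0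
  k3_ne : ∀ s, k3 s ≠ 0
  frenet_t : ∀ s, HasDerivAt t (-(k1 s) • n1 s) s
  frenet_n1 : ∀ s, HasDerivAt n1 (k1 s • t s + k2 s • n2 s) s
  frenet_n2 : ∀ s, HasDerivAt n2 (k2 s • n1 s + k3 s • n3 s) s
  frenet_n3 : ∀ s, HasDerivAt n3 (-(k3 s) • n2 s) s

lemma g4_add_left (x y z : Fin 4 → ℝ) : g4 (x + y) z = g4 x z + g4 y z := by
  simp [g4, Pi.add_apply]; ring

lemma g4_smul_left (a : ℝ) (x z : Fin 4 → ℝ) : g4 (a • x) z = a * g4 x z := by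
  simp [g4, Pi.smul_apply, smul_eq_mul]; ring

lemma g4_smul_right (a : ℝ) (x z : Fin 4 → ℝ) : g4 x (a • z) = a * g4 x z := by
  simp [g4, Pi.smul_apply, smul_eq_mul]; ring

/-- If `C̄` is a Bertrand-type companion of the `C^∞`-special timelike Frenet curve `C`
in `E⁴₂`, i.e. `c̄(φ(s)) = c(s) + α(s)·n₁(s)` with `n̄₁(φ(s))` a scalar multiple of
`n₁(s)` for all `s`, then `α' = 0`, i.e. `α` is a constant function. -/
theorem timelike_bertrand_E42_alpha_const
    (C Cb : TimelikeFrenetE42) (φ α : ℝ → ℝ)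
    (hφ : ContDiff ℝ (⊤ : ℕ∞) φ) (hφ' : ∀ s, deriv φ s ≠ 0)
    (hα : ContDiff ℝ (⊤ : ℕ∞) α)
    (hpos : ∀ s, Cb.c (φ s) = C.c s + α s • C.n1 s)
    (hnor : ∀ s, ∃ lam : ℝ, Cb.n1 (φ s) = lam • C.n1 s) :
    (∀ s, deriv α s = 0) ∧ (∀ s₁ s₂, α s₁ = α s₂) := by
  have key : ∀ s, deriv α s = 0 := by
    intro s
    have hφd : HasDerivAt φ (deriv φ s) s :=
      ((hφ.differentiable (by norm_num)) s).hasDerivAt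
    have hαd : HasDerivAt α (deriv α s) s :=
      ((hα.differentiable (by norm_num)) s).hasDerivAt
    have hL : HasDerivAt (fun u => Cb.c (φ u)) (deriv φ s • Cb.t (φ s)) s :=
      HasDerivAt.scomp s (Cb.deriv_c (φ s)) hφd
    have hR : HasDerivAt (fun u => C.c u + α u • C.n1 u)
        (C.t s + (α s • (C.k1 s • C.t s + C.k2 s • C.n2 s) + deriv α s • C.n1 s)) s :=
      (C.deriv_c s).add (hαd.smul (C.frenet_n1 s))
    have hfun : (fun u => Cb.c (φ u)) = fun u => C.c u + α u • C.n1 u :=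
      funext hpos
    rw [hfun] at hL
    have heq := hL.unique hR
    have h2 := congrArg (fun v => g4 v (C.n1 s)) heq
    obtain ⟨lam, hlam⟩ := hnor s
    have hlam2 : lam ^ 2 = 1 := by
      have := Cb.unit_n1 (φ s)
      rw [hlam, g4_smul_left, g4_smul_right, C.unit_n1 s] at this
      nlinarith
    have hlamne : lam ≠ 0 := by
      intro h; rw [h] at hlam2; norm_num at hlam2
    have htb : g4 (Cb.t (φ s)) (C.n1 s) = 0 := by
      have := Cb.orth_t_n1 (φ s)
      rw [hlam, g4_smul_right] at this
      exact (mul_eq_zero.mp this).resolve_left hlamne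
    simp only [g4_add_left, g4_smul_left, htb, C.orth_t_n1, C.unit_n1,
      C.orth_n1_n2] at h2
    have hn1n2 : g4 (C.n2 s) (C.n1 s) = 0 := by
      have := C.orth_n1_n2 s
      simpa [g4, mul_comm] using this
    have htn1 : g4 (C.t s) (C.n1 s) = 0 := C.orth_t_n1 s
    simp only [hn1n2, htn1, mul_zero, zero_add, add_zero, mul_neg_one] at h2
    linarith
  refine ⟨key, ?_⟩
  exact fun s₁ s₂ => is_const_of_deriv_eq_zero (hα.differentiable (by norm_num)) key s₁ s₂
end
end

section
/- There is no C∞-special Frenet curve which is a Bertrand curve in the semi-Euclidean space E^{n+1}_ν with n ≥ 3. Precisely: fix n ≥ 3 and 0 ≤ ν ≤ n+1, and let C (data c, e₁, …, e_{n+1}, k₁, …, kₙ, signs ε₁, …, ε_{n+1}) and C̄ (data c̄, ē₁, …, ē_{n+1}, k̄₁, …, k̄ₙ, signs ε̄₁, …, ε̄_{n+1}) be C∞-special Frenet curves in E^{n+1}_ν. Let φ : ℝ → ℝ be smooth with φ'(s) ≠ 0 for all s and α : ℝ → ℝ smooth such that c̄(φ(s)) = c(s) + α(s)·e₂(s) and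 ē₂(φ(s)) is a scalar multiple of e₂(s) for all s. Then α(s) = 0 for all s, hence c̄(φ(s)) = c(s) for all s. -/
noncomputable section

/-- The indefinite metric of the semi-Euclidean space `E^{n+1}_ν`:
`g(v,w) = -∑_{i=1}^{ν} vᵢwᵢ + ∑_{i=ν+1}^{n+1} vᵢwᵢ` (indices `0`-based here). -/
def gnu (n ν : ℕ) (v w : Fin (n + 1) → ℝ) : ℝ :=
  ∑ i : Fin (n + 1), (if (i : ℕ) < ν then (-1 : ℝ) else 1) * v i * w i

/-- A `C^∞`-special Frenet curve in `E^{n+1}_ν`: a smooth curve with Frenet frame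
`e₀ = c', e₁, …, eₙ` (`0`-based; the paper's `e₁, …, e_{n+1}`), signs
`εᵢ = g(eᵢ,eᵢ) ∈ {±1}`, and nowhere-vanishing curvatures `k₀, …, k_{n-1}` (the paper's
`k₁, …, kₙ`) satisfying the Frenet equations `e₀' = ε₁·k₀·e₁`,
`eᵢ' = -εᵢ₋₁·kᵢ₋₁·eᵢ₋₁ + εᵢ₊₁·kᵢ·eᵢ₊₁` for `1 ≤ i ≤ n-1`, and
`eₙ' = -εₙ₋₁·kₙ₋₁·eₙ₋₁`. -/
structure FrenetSemiEuclidean (n ν : ℕ) where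
  c : ℝ → Fin (n + 1) → ℝ
  e : ℕ → ℝ → Fin (n + 1) → ℝ
  eps : ℕ → ℝ
  k : ℕ → ℝ → ℝ
  smooth_c : ContDiff ℝ (⊤ : ℕ∞) c
  smooth_e : ∀ i, i ≤ n → ContDiff ℝ (⊤ : ℕ∞) (e i)
  smooth_k : ∀ i, i < n → ContDiff ℝ (⊤ : ℕ∞) (k i)
  eps_pm : ∀ i, i ≤ n → eps i = 1 ∨ eps i = -1
  deriv_c : ∀ s, HasDerivAt c (e 0 s) s
  orth : ∀ i j, i ≤ n → j ≤ n → i ≠ j → ∀ s, gnu n ν (e i s) (e j s) = 0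
  unit : ∀ i, i ≤ n → ∀ s, gnu n ν (e i s) (e i s) = eps i
  k_ne : ∀ i, i < n → ∀ s, k i s ≠ 0
  frenet_first : ∀ s, HasDerivAt (e 0) ((eps 1 * k 0 s) • e 1 s) s
  frenet_mid : ∀ i, 1 ≤ i → i < n → ∀ s,
    HasDerivAt (e i)
      ((-(eps (i - 1) * k (i - 1) s)) • e (i - 1) s + (eps (i + 1) * k i s) • e (i + 1) s) s
  frenet_last : ∀ s, HasDerivAt (e n) ((-(eps (n - 1) * k (n - 1) s)) • e (n - 1) s) s

/-!
Write `ē₀ = Cb.e 0` for the tangent of the mate and `d = c̄ ∘ φ - c = α • e₁` for the offset.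
For `j ≥ 2` the function `g(d, e_j)` vanishes identically; differentiating it with the Frenet
equations gives `φ' g(ē₀ ∘ φ, e_j) = 0` for `j ≥ 3` and `φ' g(ē₀ ∘ φ, e₂) = α k₁`.
Differentiating `g(ē₀ ∘ φ, e₃) ≡ 0` in turn, the term coming from `ē₀' ∥ ē₁ ∥ e₁` drops out,
which leaves `ε₂ k₂ g(ē₀ ∘ φ, e₂) = 0`. Since `k₁, k₂` never vanish, `α = 0`.
-/

section Metric

variable {n ν : ℕ}

lemma gnu_add_right (x y w : Fin (n + 1) → ℝ) :
    gnu n ν w (x + y) = gnu n ν w x + gnu n ν w y := by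
  simp only [gnu, Pi.add_apply, mul_add, Finset.sum_add_distrib]

lemma gnu_sub_left (x y w : Fin (n + 1) → ℝ) :
    gnu n ν (x - y) w = gnu n ν x w - gnu n ν y w := by
  simp only [gnu, Pi.sub_apply, mul_sub, sub_mul, Finset.sum_sub_distrib]

lemma gnu_smul_left (a : ℝ) (x w : Fin (n + 1) → ℝ) :
    gnu n ν (a • x) w = a * gnu n ν x w := by
  simp only [gnu, Pi.smul_apply, smul_eq_mul, Finset.mul_sum]
  exact Finset.sum_congr rfl fun _ _ => by ring

lemma gnu_smul_right (a : ℝ) (x w : Fin (n + 1) → ℝ) :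
    gnu n ν w (a • x) = a * gnu n ν w x := by
  simp only [gnu, Pi.smul_apply, smul_eq_mul, Finset.mul_sum]
  exact Finset.sum_congr rfl fun _ _ => by ring

lemma hasDerivAt_gnu {v w : ℝ → Fin (n + 1) → ℝ} {v' w' : Fin (n + 1) → ℝ} {s : ℝ}
    (hv : HasDerivAt v v' s) (hw : HasDerivAt w w' s) :
    HasDerivAt (fun t => gnu n ν (v t) (w t)) (gnu n ν v' (w s) + gnu n ν (v s) w') s := by
  have hsum := HasDerivAt.fun_sum (u := Finset.univ) fun i _ =>
    ((hasDerivAt_pi.mp hv i).const_mul (if (i : ℕ) < ν then (-1 : ℝ) else 1))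
      |>.fun_mul (hasDerivAt_pi.mp hw i)
  simpa only [gnu, Finset.sum_add_distrib] using hsum

end Metric

namespace FrenetSemiEuclidean

variable {n ν : ℕ} (C : FrenetSemiEuclidean n ν)

lemma eps_mul_self {i : ℕ} (hi : i ≤ n) : C.eps i * C.eps i = 1 := by
  rcases C.eps_pm i hi with h | h <;> rw [h] <;> norm_num

lemma eps_ne_zero {i : ℕ} (hi : i ≤ n) : C.eps i ≠ 0 := by
  rcases C.eps_pm i hi with h | h <;> rw [h] <;> norm_num

theorem gnu_deriv_e_eq {j : ℕ} (hj : 1 ≤ j) (hjn : j ≤ n) {u : ℝ → Fin (n + 1) → ℝ}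
    {u' : Fin (n + 1) → ℝ} {s : ℝ} (hu : HasDerivAt u u' s)
    (hzero : ∀ t, gnu n ν (u t) (C.e j t) = 0)
    (hnext : j < n → gnu n ν (u s) (C.e (j + 1) s) = 0) :
    gnu n ν u' (C.e j s) = C.eps (j - 1) * C.k (j - 1) s * gnu n ν (u s) (C.e (j - 1) s) := by
  obtain ⟨a, hej, ha⟩ : ∃ a : ℝ, HasDerivAt (C.e j)
      ((-(C.eps (j - 1) * C.k (j - 1) s)) • C.e (j - 1) s + a • C.e (j + 1) s) s ∧
      gnu n ν (u s) (a • C.e (j + 1) s) = 0 := by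
    rcases hjn.lt_or_eq with hlt | rfl
    · exact ⟨_, C.frenet_mid j hj hlt s, by rw [gnu_smul_right, hnext hlt, mul_zero]⟩
    · exact ⟨0, by simpa using C.frenet_last s, by rw [gnu_smul_right, zero_mul]⟩
  have hD := hasDerivAt_gnu (ν := ν) hu hej
  rw [show (fun t => gnu n ν (u t) (C.e j t)) = fun _ => 0 from funext hzero] at hD
  have h := (hasDerivAt_const s (0 : ℝ)).unique hD
  rw [gnu_add_right, gnu_smul_right, ha] at h
  linarith

end FrenetSemiEuclidean

section Bertrand

variable {n ν : ℕ} (C Cb : FrenetSemiEuclidean n ν) {φ α : ℝ → ℝ}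

theorem deriv_mul_gnu_tangent_e (hφ : Differentiable ℝ φ)
    (hpos : ∀ s, Cb.c (φ s) = C.c s + α s • C.e 1 s) {j : ℕ} (hj : 2 ≤ j) (hjn : j ≤ n)
    (s : ℝ) :
    deriv φ s * gnu n ν (Cb.e 0 (φ s)) (C.e j s) =
      C.eps (j - 1) * C.k (j - 1) s * α s * gnu n ν (C.e 1 s) (C.e (j - 1) s) := by
  have hoff : ∀ t, Cb.c (φ t) - C.c t = α t • C.e 1 t := fun t => by
    rw [hpos, add_sub_cancel_left]
  have horth : ∀ i, 2 ≤ i → i ≤ n → ∀ t, gnu n ν (Cb.c (φ t) - C.c t) (C.e i t) = 0 :=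
    fun i hi hin t => by rw [hoff, gnu_smul_left, C.orth 1 i (by omega) hin (by omega), mul_zero]
  have hd : HasDerivAt (fun t => Cb.c (φ t) - C.c t) (deriv φ s • Cb.e 0 (φ s) - C.e 0 s) s :=
    ((Cb.deriv_c (φ s)).scomp s (hφ s).hasDerivAt).sub (C.deriv_c s)
  have h := C.gnu_deriv_e_eq (by omega) hjn hd (horth j hj hjn)
    fun hlt => horth (j + 1) (by omega) hlt s
  rw [gnu_sub_left, gnu_smul_left, C.orth 0 j (by omega) hjn (by omega), sub_zero, hoff,
    gnu_smul_left] at h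
  rw [h]
  ring

theorem gnu_tangent_e_eq_zero (hφ' : ∀ s, deriv φ s ≠ 0)
    (hpos : ∀ s, Cb.c (φ s) = C.c s + α s • C.e 1 s) {j : ℕ} (hj : 3 ≤ j) (hjn : j ≤ n)
    (s : ℝ) : gnu n ν (Cb.e 0 (φ s)) (C.e j s) = 0 := by
  have h := deriv_mul_gnu_tangent_e C Cb (fun t => differentiableAt_of_deriv_ne_zero (hφ' t))
    hpos (by omega) hjn s
  rw [C.orth 1 (j - 1) (by omega) (by omega) (by omega), mul_zero] at h
  exact (mul_eq_zero.mp h).resolve_left (hφ' s)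

theorem deriv_mul_gnu_tangent_e_two (hn : 2 ≤ n) (hφ' : ∀ s, deriv φ s ≠ 0)
    (hpos : ∀ s, Cb.c (φ s) = C.c s + α s • C.e 1 s) (s : ℝ) :
    deriv φ s * gnu n ν (Cb.e 0 (φ s)) (C.e 2 s) = C.k 1 s * α s := by
  have h := deriv_mul_gnu_tangent_e C Cb (fun t => differentiableAt_of_deriv_ne_zero (hφ' t))
    hpos le_rfl hn s
  norm_num only at h
  rw [h, C.unit 1 (by omega) s]
  linear_combination C.k 1 s * α s * C.eps_mul_self (by omega : 1 ≤ n)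

theorem gnu_tangent_e_two_eq_zero (hn : 3 ≤ n) (hφ' : ∀ s, deriv φ s ≠ 0)
    (hpos : ∀ s, Cb.c (φ s) = C.c s + α s • C.e 1 s)
    (hnor : ∀ s, ∃ lam : ℝ, Cb.e 1 (φ s) = lam • C.e 1 s) (s : ℝ) :
    gnu n ν (Cb.e 0 (φ s)) (C.e 2 s) = 0 := by
  have hu : HasDerivAt (fun t => Cb.e 0 (φ t))
      (deriv φ s • (Cb.eps 1 * Cb.k 0 (φ s)) • Cb.e 1 (φ s)) s :=
    (Cb.frenet_first (φ s)).scomp s (differentiableAt_of_deriv_ne_zero (hφ' s)).hasDerivAt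
  have h := C.gnu_deriv_e_eq (j := 3) (by norm_num) hn hu
    (gnu_tangent_e_eq_zero C Cb hφ' hpos le_rfl hn)
    fun h4 => gnu_tangent_e_eq_zero C Cb hφ' hpos (j := 4) (by norm_num) h4 s
  obtain ⟨lam, hlam⟩ := hnor s
  rw [hlam, gnu_smul_left, gnu_smul_left, gnu_smul_left,
    C.orth 1 3 (by omega) hn (by norm_num), mul_zero, mul_zero, mul_zero] at h
  exact (mul_eq_zero.mp h.symm).resolve_left
    (mul_ne_zero (C.eps_ne_zero (by omega)) (C.k_ne 2 (by omega) s))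

end Bertrand

theorem no_bertrand_semiEuclidean_general
    (n ν : ℕ) (hn : 3 ≤ n)
    (C Cb : FrenetSemiEuclidean n ν) (φ α : ℝ → ℝ)
    (hφ' : ∀ s, deriv φ s ≠ 0)
    (hpos : ∀ s, Cb.c (φ s) = C.c s + α s • C.e 1 s)
    (hnor : ∀ s, ∃ lam : ℝ, Cb.e 1 (φ s) = lam • C.e 1 s) :
    (∀ s, α s = 0) ∧ (∀ s, Cb.c (φ s) = C.c s) := by
  have hα : ∀ s, α s = 0 := fun s => by
    have h := deriv_mul_gnu_tangent_e_two C Cb (by omega) hφ' hpos s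
    rw [gnu_tangent_e_two_eq_zero C Cb hn hφ' hpos hnor s, mul_zero] at h
    exact (mul_eq_zero.mp h.symm).resolve_left (C.k_ne 1 (by omega) s)
  exact ⟨hα, fun s => by rw [hpos, hα, zero_smul, add_zero]⟩

/-- There is no `C^∞`-special Frenet curve which is a Bertrand curve in `E^{n+1}_ν` for
`n ≥ 3`: if `c̄(φ(s)) = c(s) + α(s)·e₂(s)` (here `e 1` is the paper's principal normal
`e₂`) with `ē₂(φ(s))` a scalar multiple of `e₂(s)` for all `s`, then `α ≡ 0` and hence
`c̄(φ(s)) = c(s)` for all `s`. -/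
theorem no_bertrand_semiEuclidean
    (n ν : ℕ) (hn : 3 ≤ n) (hν : ν ≤ n + 1)
    (C Cb : FrenetSemiEuclidean n ν) (φ α : ℝ → ℝ)
    (hφ : ContDiff ℝ (⊤ : ℕ∞) φ) (hφ' : ∀ s, deriv φ s ≠ 0)
    (hα : ContDiff ℝ (⊤ : ℕ∞) α)
    (hpos : ∀ s, Cb.c (φ s) = C.c s + α s • C.e 1 s)
    (hnor : ∀ s, ∃ lam : ℝ, Cb.e 1 (φ s) = lam • C.e 1 s) :
    (∀ s, α s = 0) ∧ (∀ s, Cb.c (φ s) = C.c s) :=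
  no_bertrand_semiEuclidean_general n ν hn C Cb φ α hφ' hpos hnor
end
end

section
/- Let C and C̄ form a timelike (1,3)-Bertrand pair in E⁴₂ via the map φ and real constants α, β with c̄(φ(s)) = c(s) + α·n₁(s) + β·n₃(s), and suppose the real constant γ satisfies γ·(α·k₂(s) - β·k₃(s)) - α·k₁(s) = 1 and α·k₂(s) - β·k₃(s) ≠ 0 for all s, with γ² > 1. Then (φ'(s))² = (γ² - 1)·(α·k₂(s) - β·k₃(s))² for all s ∈ ℝ. -/
noncomputable section

/-! Differentiating `c̄ ∘ φ = c + α n₁ + β n₃` with the Frenet equations gives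
`φ' t̄ = (1 + α k₁) t + (α k₂ - β k₃) n₂`. Since `t̄` and `t` are unit timelike and `n₂` is a unit
spacelike vector orthogonal to `t`, taking `g`-lengths yields
`φ'² = (1 + α k₁)² - (α k₂ - β k₃)²`, and `1 + α k₁ = γ (α k₂ - β k₃)` finishes the computation. -/

lemma g4_smul_self (a : ℝ) (x : Fin 4 → ℝ) : g4 (a • x) (a • x) = a ^ 2 * g4 x x := by
  simp only [g4, Pi.smul_apply, smul_eq_mul]
  ring

lemma g4_smul_add_smul_self (a b : ℝ) (x y : Fin 4 → ℝ) :
    g4 (a • x + b • y) (a • x + b • y) =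
      a ^ 2 * g4 x x + 2 * a * b * g4 x y + b ^ 2 * g4 y y := by
  simp only [g4, Pi.add_apply, Pi.smul_apply, smul_eq_mul]
  ring

namespace TimelikeFrenetE42

variable (C : TimelikeFrenetE42)

lemma g4_smul_t_add_smul_n2_self (a b : ℝ) (s : ℝ) :
    g4 (a • C.t s + b • C.n2 s) (a • C.t s + b • C.n2 s) = b ^ 2 - a ^ 2 := by
  rw [g4_smul_add_smul_self, C.unit_t, C.unit_n2, C.orth_t_n2]
  ring

lemma hasDerivAt_add_smul_n1_add_smul_n3 (α β s : ℝ) :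
    HasDerivAt (fun u => C.c u + α • C.n1 u + β • C.n3 u)
      ((1 + α * C.k1 s) • C.t s + (α * C.k2 s - β * C.k3 s) • C.n2 s) s :=
  (((C.deriv_c s).add ((C.frenet_n1 s).const_smul α)).add
    ((C.frenet_n3 s).const_smul β)).congr_deriv (by module)

lemma deriv_sq_of_comp_eq_add_smul_n1_add_smul_n3 (Cb : TimelikeFrenetE42) {φ : ℝ → ℝ}
    {α β s : ℝ} (hφ : DifferentiableAt ℝ φ s)
    (hpos : ∀ u, Cb.c (φ u) = C.c u + α • C.n1 u + β • C.n3 u) :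
    deriv φ s ^ 2 = (1 + α * C.k1 s) ^ 2 - (α * C.k2 s - β * C.k3 s) ^ 2 := by
  have hcomp : HasDerivAt (fun u => C.c u + α • C.n1 u + β • C.n3 u)
      (deriv φ s • Cb.t (φ s)) s := by
    rw [← funext hpos]
    exact (Cb.deriv_c (φ s)).scomp s hφ.hasDerivAt
  have hvel := hcomp.unique (C.hasDerivAt_add_smul_n1_add_smul_n3 α β s)
  have hlen := congrArg (fun v => g4 v v) hvel
  simp only [g4_smul_self, Cb.unit_t, C.g4_smul_t_add_smul_n2_self] at hlen
  linarith

end TimelikeFrenetE42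

theorem bertrand13_E42_phi_deriv_sq_general
    (C Cb : TimelikeFrenetE42) (φ : ℝ → ℝ) (α β γ : ℝ)
    (hφ : ContDiff ℝ (⊤ : ℕ∞) φ)
    (hpos : ∀ s, Cb.c (φ s) = C.c s + α • C.n1 s + β • C.n3 s)
    (hγ : ∀ s, γ * (α * C.k2 s - β * C.k3 s) - α * C.k1 s = 1) :
    ∀ s, (deriv φ s) ^ 2 = (γ ^ 2 - 1) * (α * C.k2 s - β * C.k3 s) ^ 2 := by
  intro s
  have hφs : DifferentiableAt ℝ φ s := hφ.differentiable (by simp) s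
  rw [C.deriv_sq_of_comp_eq_add_smul_n1_add_smul_n3 Cb hφs hpos]
  linear_combination -(1 + α * C.k1 s + γ * (α * C.k2 s - β * C.k3 s)) * hγ s

/-- For a timelike `(1,3)`-Bertrand pair in `E⁴₂` with constant `α, β` and a constant
`γ` with `γ² > 1` satisfying `γ·(α·k₂ - β·k₃) - α·k₁ = 1` and `α·k₂ - β·k₃ ≠ 0`
everywhere: `(φ'(s))² = (γ² - 1)·(α·k₂(s) - β·k₃(s))²` for all `s`. -/
theorem bertrand13_E42_phi_deriv_sq
    (C Cb : TimelikeFrenetE42) (φ : ℝ → ℝ) (α β γ : ℝ)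
    (hφ : ContDiff ℝ (⊤ : ℕ∞) φ) (hφ' : ∀ s, deriv φ s ≠ 0)
    (hpos : ∀ s, Cb.c (φ s) = C.c s + α • C.n1 s + β • C.n3 s)
    (hspan : ∀ s, Submodule.span ℝ ({Cb.n1 (φ s), Cb.n3 (φ s)} : Set (Fin 4 → ℝ)) =
      Submodule.span ℝ ({C.n1 s, C.n3 s} : Set (Fin 4 → ℝ)))
    (hγ2 : γ ^ 2 > 1)
    (hne : ∀ s, α * C.k2 s - β * C.k3 s ≠ 0)
    (hγ : ∀ s, γ * (α * C.k2 s - β * C.k3 s) - α * C.k1 s = 1) :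
    ∀ s, (deriv φ s) ^ 2 = (γ ^ 2 - 1) * (α * C.k2 s - β * C.k3 s) ^ 2 :=
  bertrand13_E42_phi_deriv_sq_general C Cb φ α β γ hφ hpos hγ
end
end

section
/- Let C (data c, t, n₁, n₂, n₃, k₁, k₂, k₃) be a C∞-special timelike Frenet curve in E⁴₂ with k₁(s) > 0, k₂(s) ≠ 0, k₃(s) > 0 for all s, and suppose there exist real constants α, β, γ, δ with γ² > 1 and δ² > 1 such that for all s: α·k₂(s) - β·k₃(s) ≠ 0 and δ·k₃(s) = -γ·k₁(s) + k₂(s). Let ε be the sign of α·k₂(s) - β·k₃(s) and set D(s) = √((γ·k₁(s) - k₂(s))² - k₃(s)²). Then the four vector fields t̄ = ε·(γ² - 1)^{-1/2}·(γ·t + n₂), n̄₁ = (ε·D)^{-1}·((γ·k₁ - k₂)·n₁ - k₃·n₃), n̄₂ = ε·(γ² - 1)^{-1/2}·(t + γ·n₂), n̄₃ = (ε·D)^{-1}·(-k₃·n₁ + (γ·k₁ - k₂)·n₃) are mutually g-orthogonal at every s, with g(t̄,t̄) = g(n̄₁,n̄₁) = -1 and g(n̄₂,n̄₂) = g(n̄₃,n̄₃)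 = 1; moreover the plane spanned by n̄₁(s) and n̄₃(s) equals the plane spanned by n₁(s) and n₃(s) for every s. -/
noncomputable section

/-!
The mate frame is obtained from the Frenet frame by two hyperbolic rotations (Lorentz boosts):
one of the timelike/spacelike pair `t, n₂`, giving `t̄, n̄₂`, and one of the pair `n₁, n₃`, giving
`n̄₁, n̄₃`. A boost `λ(a u + b v), λ(b u + a v)` of a `g`-orthonormal pair `u, v` with `u` timelike
is again such a pair as soon as `λ²(a² - b²) = 1`, and it stays `g`-orthogonal to everything
orthogonal to `u` and `v`. Here `a² - b²` is `γ² - 1` and `(γ k₁ - k₂)² - k₃² = (δ² - 1) k₃²`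
respectively, both positive, so the normalising factors are genuine.
-/

lemma g4_comm (v w : Fin 4 → ℝ) : g4 v w = g4 w v := by
  simp only [g4]; ring

lemma g4_smul_smul (a b : ℝ) (v w : Fin 4 → ℝ) : g4 (a • v) (b • w) = a * b * g4 v w := by
  simp only [g4, Pi.smul_apply, smul_eq_mul]; ring

lemma g4_smul_add_smul (a b c d : ℝ) (x y z w : Fin 4 → ℝ) :
    g4 (a • x + b • y) (c • z + d • w) =
      a * c * g4 x z + a * d * g4 x w + b * c * g4 y z + b * d * g4 y w := by
  simp only [g4, Pi.add_apply, Pi.smul_apply, smul_eq_mul]; ring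

section Boost

variable {u v : Fin 4 → ℝ} (hu : g4 u u = -1) (hv : g4 v v = 1) (huv : g4 u v = 0)
  {l a b : ℝ}
include hu hv huv

lemma g4_boost_fst (h : l ^ 2 * (a ^ 2 - b ^ 2) = 1) :
    g4 (l • (a • u + b • v)) (l • (a • u + b • v)) = -1 := by
  rw [g4_smul_smul, g4_smul_add_smul, g4_comm v u, hu, hv, huv]
  linear_combination -h

lemma g4_boost_snd (h : l ^ 2 * (a ^ 2 - b ^ 2) = 1) :
    g4 (l • (b • u + a • v)) (l • (b • u + a • v)) = 1 := by
  rw [g4_smul_smul, g4_smul_add_smul, g4_comm v u, hu, hv, huv]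
  linear_combination h

lemma g4_boost_fst_snd :
    g4 (l • (a • u + b • v)) (l • (b • u + a • v)) = 0 := by
  rw [g4_smul_smul, g4_smul_add_smul, g4_comm v u, hu, hv, huv]
  ring

end Boost

lemma g4_smul_add_smul_eq_zero {u v x y : Fin 4 → ℝ} (hux : g4 u x = 0) (huy : g4 u y = 0)
    (hvx : g4 v x = 0) (hvy : g4 v y = 0) (l a b m c d : ℝ) :
    g4 (l • (a • u + b • v)) (m • (c • x + d • y)) = 0 := by
  rw [g4_smul_smul, g4_smul_add_smul, hux, huy, hvx, hvy]
  ring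

lemma Submodule.span_pair_eq_of_det_ne_zero {K V : Type*} [Field K] [AddCommGroup V] [Module K V]
    (x y : V) {a b c d : K} (h : a * d - b * c ≠ 0) :
    span K {a • x + b • y, c • x + d • y} = span K {x, y} := by
  apply le_antisymm <;> rw [span_le, Set.insert_subset_iff, Set.singleton_subset_iff]
  · exact ⟨mem_span_pair.mpr ⟨a, b, rfl⟩, mem_span_pair.mpr ⟨c, d, rfl⟩⟩
  · obtain ⟨e, he⟩ : ∃ e, e * (a * d - b * c) = 1 := ⟨_, inv_mul_cancel₀ h⟩
    refine ⟨mem_span_pair.mpr ⟨e * d, -(e * b), ?_⟩, mem_span_pair.mpr ⟨-(e * c), e * a, ?_⟩⟩ <;>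
    · match_scalars <;> first | linear_combination he | ring

lemma Real.sign_sq_of_ne_zero {r : ℝ} (h : r ≠ 0) : r.sign ^ 2 = 1 := by
  rcases Real.sign_apply_eq_of_ne_zero r h with h | h <;> rw [h] <;> norm_num

lemma sq_mul_inv_sqrt_mul_self {ε x : ℝ} (hε : ε ^ 2 = 1) (hx : 0 < x) :
    (ε * (√x)⁻¹) ^ 2 * x = 1 := by
  rw [mul_pow, hε, inv_pow, Real.sq_sqrt hx.le, one_mul, inv_mul_cancel₀ hx.ne']

lemma sq_inv_mul_sqrt_mul_self {ε x : ℝ} (hε : ε ^ 2 = 1) (hx : 0 < x) :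
    (ε * √x)⁻¹ ^ 2 * x = 1 := by
  rw [inv_pow, mul_pow, hε, Real.sq_sqrt hx.le, one_mul, inv_mul_cancel₀ hx.ne']

namespace TimelikeFrenetE42

lemma boost_frame_orthonormal (C : TimelikeFrenetE42) (s : ℝ) {l a b m c d : ℝ}
    (hl : l ^ 2 * (a ^ 2 - b ^ 2) = 1) (hm : m ^ 2 * (c ^ 2 - d ^ 2) = 1) :
    let T := l • (a • C.t s + b • C.n2 s)
    let N₁ := m • (c • C.n1 s + d • C.n3 s)
    let N₂ := l • (b • C.t s + a • C.n2 s)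
    let N₃ := m • (d • C.n1 s + c • C.n3 s)
    g4 T T = -1 ∧ g4 N₁ N₁ = -1 ∧ g4 N₂ N₂ = 1 ∧ g4 N₃ N₃ = 1 ∧
      g4 T N₁ = 0 ∧ g4 T N₂ = 0 ∧ g4 T N₃ = 0 ∧
      g4 N₁ N₂ = 0 ∧ g4 N₁ N₃ = 0 ∧ g4 N₂ N₃ = 0 ∧
      Submodule.span ℝ {N₁, N₃} = Submodule.span ℝ {C.n1 s, C.n3 s} := by
  intro T N₁ N₂ N₃
  have h_t_n2 := C.orth_t_n2 s
  have h_n1_n3 := C.orth_n1_n3 s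
  have h_n2_n1 : g4 (C.n2 s) (C.n1 s) = 0 := by rw [g4_comm]; exact C.orth_n1_n2 s
  have h_plane_orth (a b c d : ℝ) :
      g4 (l • (a • C.t s + b • C.n2 s)) (m • (c • C.n1 s + d • C.n3 s)) = 0 :=
    g4_smul_add_smul_eq_zero (C.orth_t_n1 s) (C.orth_t_n3 s) h_n2_n1 (C.orth_n2_n3 s) l a b m c d
  refine ⟨g4_boost_fst (C.unit_t s) (C.unit_n2 s) h_t_n2 hl,
    g4_boost_fst (C.unit_n1 s) (C.unit_n3 s) h_n1_n3 hm,
    g4_boost_snd (C.unit_t s) (C.unit_n2 s) h_t_n2 hl,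
    g4_boost_snd (C.unit_n1 s) (C.unit_n3 s) h_n1_n3 hm,
    h_plane_orth .., g4_boost_fst_snd (C.unit_t s) (C.unit_n2 s) h_t_n2, h_plane_orth ..,
    (g4_comm _ _).trans (h_plane_orth ..), g4_boost_fst_snd (C.unit_n1 s) (C.unit_n3 s) h_n1_n3,
    h_plane_orth .., ?_⟩
  simp only [N₁, N₃, smul_add, smul_smul]
  have h_det : m * c * (m * c) - m * d * (m * d) = 1 := by linear_combination hm
  exact Submodule.span_pair_eq_of_det_ne_zero _ _ (h_det ▸ one_ne_zero)

end TimelikeFrenetE42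

theorem bertrand13_E42_mate_frame_orthonormal_general
    (C : TimelikeFrenetE42)
    (α β γ δ ε : ℝ) (hγ2 : γ ^ 2 > 1) (hδ2 : δ ^ 2 > 1)
    (h1 : ∀ s, α * C.k2 s - β * C.k3 s ≠ 0)
    (h3 : ∀ s, δ * C.k3 s = -(γ * C.k1 s) + C.k2 s)
    (hε : ∀ s, ε = Real.sign (α * C.k2 s - β * C.k3 s)) :
    ∀ s,
      let D := Real.sqrt ((γ * C.k1 s - C.k2 s) ^ 2 - C.k3 s ^ 2)
      let tb := (ε * (Real.sqrt (γ ^ 2 - 1))⁻¹) • (γ • C.t s + C.n2 s)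
      let nb1 := (ε * D)⁻¹ • ((γ * C.k1 s - C.k2 s) • C.n1 s - C.k3 s • C.n3 s)
      let nb2 := (ε * (Real.sqrt (γ ^ 2 - 1))⁻¹) • (C.t s + γ • C.n2 s)
      let nb3 := (ε * D)⁻¹ • (-(C.k3 s) • C.n1 s + (γ * C.k1 s - C.k2 s) • C.n3 s)
      g4 tb tb = -1 ∧ g4 nb1 nb1 = -1 ∧ g4 nb2 nb2 = 1 ∧ g4 nb3 nb3 = 1 ∧
      g4 tb nb1 = 0 ∧ g4 tb nb2 = 0 ∧ g4 tb nb3 = 0 ∧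
      g4 nb1 nb2 = 0 ∧ g4 nb1 nb3 = 0 ∧ g4 nb2 nb3 = 0 ∧
      Submodule.span ℝ ({nb1, nb3} : Set (Fin 4 → ℝ)) =
        Submodule.span ℝ ({C.n1 s, C.n3 s} : Set (Fin 4 → ℝ)) := by
  intro s
  have hε_sq : ε ^ 2 = 1 := by rw [hε s]; exact Real.sign_sq_of_ne_zero (h1 s)
  have hD_pos : 0 < (γ * C.k1 s - C.k2 s) ^ 2 - C.k3 s ^ 2 := by
    have hk3_sq : 0 < C.k3 s ^ 2 := sq_pos_of_ne_zero (C.k3_ne s)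
    rw [show γ * C.k1 s - C.k2 s = -(δ * C.k3 s) by linarith [h3 s]]
    nlinarith
  have hl : (ε * (√(γ ^ 2 - 1))⁻¹) ^ 2 * (γ ^ 2 - 1 ^ 2) = 1 := by
    rw [one_pow]; exact sq_mul_inv_sqrt_mul_self hε_sq (by linarith)
  have hm : (ε * √((γ * C.k1 s - C.k2 s) ^ 2 - C.k3 s ^ 2))⁻¹ ^ 2 *
      ((γ * C.k1 s - C.k2 s) ^ 2 - (-C.k3 s) ^ 2) = 1 := by
    rw [neg_sq]; exact sq_inv_mul_sqrt_mul_self hε_sq hD_pos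
  simpa only [one_smul, neg_smul, sub_eq_add_neg] using C.boost_frame_orthonormal s hl hm

/-- With the hypotheses of the sufficiency construction, the four vector fields
`t̄ = ε·(γ²-1)^{-1/2}·(γ·t + n₂)`, `n̄₁ = (ε·D)⁻¹·((γ·k₁-k₂)·n₁ - k₃·n₃)`,
`n̄₂ = ε·(γ²-1)^{-1/2}·(t + γ·n₂)`, `n̄₃ = (ε·D)⁻¹·(-k₃·n₁ + (γ·k₁-k₂)·n₃)`
(where `D = √((γ·k₁-k₂)² - k₃²)` and `ε` is the sign of `α·k₂ - β·k₃`) are mutually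
`g`-orthogonal with `g(t̄,t̄) = g(n̄₁,n̄₁) = -1`, `g(n̄₂,n̄₂) = g(n̄₃,n̄₃) = 1`, and the
plane spanned by `n̄₁, n̄₃` equals the plane spanned by `n₁, n₃` at every `s`. -/
theorem bertrand13_E42_mate_frame_orthonormal
    (C : TimelikeFrenetE42)
    (hk1 : ∀ s, 0 < C.k1 s) (hk3 : ∀ s, 0 < C.k3 s)
    (α β γ δ ε : ℝ) (hγ2 : γ ^ 2 > 1) (hδ2 : δ ^ 2 > 1)
    (h1 : ∀ s, α * C.k2 s - β * C.k3 s ≠ 0)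
    (h3 : ∀ s, δ * C.k3 s = -(γ * C.k1 s) + C.k2 s)
    (hε : ∀ s, ε = Real.sign (α * C.k2 s - β * C.k3 s)) :
    ∀ s,
      let D := Real.sqrt ((γ * C.k1 s - C.k2 s) ^ 2 - C.k3 s ^ 2)
      let tb := (ε * (Real.sqrt (γ ^ 2 - 1))⁻¹) • (γ • C.t s + C.n2 s)
      let nb1 := (ε * D)⁻¹ • ((γ * C.k1 s - C.k2 s) • C.n1 s - C.k3 s • C.n3 s)
      let nb2 := (ε * (Real.sqrt (γ ^ 2 - 1))⁻¹) • (C.t s + γ • C.n2 s)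
      let nb3 := (ε * D)⁻¹ • (-(C.k3 s) • C.n1 s + (γ * C.k1 s - C.k2 s) • C.n3 s)
      g4 tb tb = -1 ∧ g4 nb1 nb1 = -1 ∧ g4 nb2 nb2 = 1 ∧ g4 nb3 nb3 = 1 ∧
      g4 tb nb1 = 0 ∧ g4 tb nb2 = 0 ∧ g4 tb nb3 = 0 ∧
      g4 nb1 nb2 = 0 ∧ g4 nb1 nb3 = 0 ∧ g4 nb2 nb3 = 0 ∧
      Submodule.span ℝ ({nb1, nb3} : Set (Fin 4 → ℝ)) =
        Submodule.span ℝ ({C.n1 s, C.n3 s} : Set (Fin 4 → ℝ)) :=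
  bertrand13_E42_mate_frame_orthonormal_general C α β γ δ ε hγ2 hδ2 h1 h3 hε
end
end

section
/- Let C (data c, t, n₁, n₂, n₃, k₁, k₂, k₃) be a C∞-special timelike Frenet curve in E⁴₂ with k₁(s) > 0, k₂(s) ≠ 0, k₃(s) > 0 for all s, and suppose there exist real constants α, β, γ, δ with γ² > 1 and δ² > 1 satisfying, for all s: α·k₂(s) - β·k₃(s) ≠ 0, γ·(α·k₂(s) - β·k₃(s)) - α·k₁(s) = 1, δ·k₃(s) = -γ·k₁(s) + k₂(s), and (γ² + 1)·k₁(s)·k₂(s) - γ·(k₁(s)² + k₂(s)² - k₃(s)²) ≠ 0. Let φ'(s) = √(γ² - 1)·|α·k₂(s) - β·k₃(s)| be the speed of c̄ = c + α·n₁ + β·n₃. Then the second curvature of c̄ with respect to its arclength (the norm ‖(dn̄₁/ds)/φ' - k̄₁·t̄‖, where t̄, n̄₁, k̄₁ are the unit tangent, unit first normal, and first curvature of c̄) equals |(γ² + 1)·k₁(s)·k₂(s) - γ·(k₁(s)² + k₂(s)² - k₃(s)²)| / (φ'(s)·√((γ² - 1)·((γ·k₁(s) - k₂(s))² - k₃(s)²)))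 and is strictly positive, where ‖v‖ = √|g(v,v)|. -/
noncomputable section

/-- The candidate `(1,3)`-Bertrand mate `c̄ = c + α·n₁ + β·n₃`. -/
def cbar (C : TimelikeFrenetE42) (α β : ℝ) : ℝ → Fin 4 → ℝ :=
  fun s => C.c s + α • C.n1 s + β • C.n3 s

/-- The speed `φ'(s) = √(γ² - 1)·|α·k₂(s) - β·k₃(s)|` of `c̄`. -/
def phip (C : TimelikeFrenetE42) (α β γ : ℝ) : ℝ → ℝ :=
  fun s => Real.sqrt (γ ^ 2 - 1) * |α * C.k2 s - β * C.k3 s|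

/-- The unit tangent `t̄(s) = c̄'(s)/φ'(s)` of `c̄`. -/
def tbar (C : TimelikeFrenetE42) (α β γ : ℝ) : ℝ → Fin 4 → ℝ :=
  fun s => (phip C α β γ s)⁻¹ • deriv (cbar C α β) s

/-- The first curvature `k̄₁ = ‖(dt̄/ds)/φ'‖` of `c̄` with respect to its arclength. -/
def k1bar (C : TimelikeFrenetE42) (α β γ : ℝ) : ℝ → ℝ :=
  fun s => nrm4 ((phip C α β γ s)⁻¹ • deriv (tbar C α β γ) s)

/-- The unit first normal `n̄₁ = -((dt̄/ds)/φ')/k̄₁` of `c̄`. -/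
def n1bar (C : TimelikeFrenetE42) (α β γ : ℝ) : ℝ → Fin 4 → ℝ :=
  fun s => -((k1bar C α β γ s)⁻¹ • ((phip C α β γ s)⁻¹ • deriv (tbar C α β γ) s))

lemma g4_expand (a b : ℝ) (v w : Fin 4 → ℝ) :
    g4 (a • v + b • w) (a • v + b • w)
      = a^2 * g4 v v + 2*(a*b) * g4 v w + b^2 * g4 w w := by
  simp [g4, Pi.add_apply, Pi.smul_apply, smul_eq_mul]; ring

lemma g4_smul (a : ℝ) (v : Fin 4 → ℝ) : g4 (a • v) (a • v) = a^2 * g4 v v := by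
  simp [g4, Pi.smul_apply, smul_eq_mul]; ring

set_option maxHeartbeats 1000000 in
lemma key_identity (γ δ k1 k2 k3 : ℝ) (hγ : γ^2 - 1 ≠ 0) (hδ : δ^2 - 1 ≠ 0)
    (hk3 : k3 ≠ 0) (hk2 : k2 = γ*k1 + δ*k3) :
    ((δ*k2-k3)^2 - (δ*k1)^2)/(δ^2-1) + 2*k3*((δ*k2-k3) - γ*(δ*k1))/(γ^2-1)
      + (1-γ^2)*k3^2*(δ^2-1)/((γ^2-1)^2)
    = ((γ^2+1)*k1*k2 - γ*(k1^2+k2^2-k3^2))^2 / ((γ^2-1)*(δ^2-1)*k3^2) := by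
  subst hk2; field_simp; ring

set_option maxHeartbeats 1000000 in
/-- With the hypotheses of the sufficiency construction, the second curvature of
`c̄ = c + α·n₁ + β·n₃` with respect to its arclength, i.e. the norm
`‖(dn̄₁/ds)/φ' - k̄₁·t̄‖`, equals
`|(γ²+1)·k₁·k₂ - γ·(k₁² + k₂² - k₃²)| / (φ'·√((γ²-1)·((γ·k₁-k₂)² - k₃²)))` and is
strictly positive. -/
theorem bertrand13_E42_mate_second_curvature
    (C : TimelikeFrenetE42)
    (hk1 : ∀ s, 0 < C.k1 s) (hk3 : ∀ s, 0 < C.k3 s)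
    (α β γ δ : ℝ) (hγ2 : γ ^ 2 > 1) (hδ2 : δ ^ 2 > 1)
    (h1 : ∀ s, α * C.k2 s - β * C.k3 s ≠ 0)
    (h2 : ∀ s, γ * (α * C.k2 s - β * C.k3 s) - α * C.k1 s = 1)
    (h3 : ∀ s, δ * C.k3 s = -(γ * C.k1 s) + C.k2 s)
    (h4 : ∀ s, (γ ^ 2 + 1) * C.k1 s * C.k2 s -
      γ * (C.k1 s ^ 2 + C.k2 s ^ 2 - C.k3 s ^ 2) ≠ 0) :
    ∀ s,
      nrm4 ((phip C α β γ s)⁻¹ • deriv (n1bar C α β γ) s -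
          k1bar C α β γ s • tbar C α β γ s) =
        |(γ ^ 2 + 1) * C.k1 s * C.k2 s -
            γ * (C.k1 s ^ 2 + C.k2 s ^ 2 - C.k3 s ^ 2)| /
          (phip C α β γ s *
            Real.sqrt ((γ ^ 2 - 1) * ((γ * C.k1 s - C.k2 s) ^ 2 - C.k3 s ^ 2))) ∧
      0 < nrm4 ((phip C α β γ s)⁻¹ • deriv (n1bar C α β γ) s -
          k1bar C α β γ s • tbar C α β γ s) := by
  have hγ1 : (0:ℝ) < γ ^ 2 - 1 := by linarith
  have hδ1 : (0:ℝ) < δ ^ 2 - 1 := by linarith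
  set m : ℝ := Real.sqrt (γ ^ 2 - 1) with hm_def
  set d : ℝ := Real.sqrt (δ ^ 2 - 1) with hd_def
  have hm2 : m ^ 2 = γ ^ 2 - 1 := Real.sq_sqrt hγ1.le
  have hd2 : d ^ 2 = δ ^ 2 - 1 := Real.sq_sqrt hδ1.le
  have hm0 : 0 < m := Real.sqrt_pos.2 hγ1
  have hd0 : 0 < d := Real.sqrt_pos.2 hδ1
  set u : ℝ → ℝ := fun s => α * C.k2 s - β * C.k3 s with hu_def
  have hu_ne : ∀ s, u s ≠ 0 := h1
  have hu_cont : Continuous u := by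
    exact (continuous_const.mul C.smooth_k2.continuous).sub
      (continuous_const.mul C.smooth_k3.continuous)
  set ε : ℝ := if 0 < u 0 then 1 else -1 with hε_def
  have hεcases : ε = 1 ∨ ε = -1 := by
    rw [hε_def]; split <;> simp
  have hε0 : ε ≠ 0 := by rcases hεcases with h | h <;> rw [h] <;> norm_num
  have hsame : ∀ s, 0 < u s * u 0 := by
    intro s
    rcases lt_trichotomy (u s * u 0) 0 with h | h | h
    · exfalso
      have h0 : (0:ℝ) ∈ Set.uIcc (u s) (u 0) := by
        rcases le_or_gt (u s) 0 with hs | hs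
        · have : 0 ≤ u 0 := by nlinarith
          exact Set.mem_uIcc.2 (Or.inl ⟨hs, this⟩)
        · have : u 0 ≤ 0 := by nlinarith
          exact Set.mem_uIcc.2 (Or.inr ⟨this, hs.le⟩)
      obtain ⟨x, _, hx⟩ := intermediate_value_uIcc (hu_cont.continuousOn) h0
      exact hu_ne x hx
    · exact absurd h (mul_ne_zero (hu_ne s) (hu_ne 0))
    · exact h
  have hεu : ∀ s, ε * |u s| = u s := by
    intro s
    rcases lt_or_gt_of_ne (hu_ne 0) with h0 | h0
    · have hs : u s < 0 := by nlinarith [hsame s]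
      have hε1 : ε = -1 := by rw [hε_def, if_neg (by linarith)]
      rw [hε1, abs_of_neg hs]; ring
    · have hs : 0 < u s := by nlinarith [hsame s]
      have hε1 : ε = 1 := by rw [hε_def, if_pos h0]
      rw [hε1, abs_of_pos hs]; ring
  have habs2 : ∀ s, |u s| = ε * u s := by
    intro s
    have h := hεu s
    rcases hεcases with hε1 | hε1 <;> rw [hε1] at h ⊢ <;> linarith
  have hphip : ∀ s, phip C α β γ s = m * |u s| := fun s => rfl
  have hphip_pos : ∀ s, 0 < phip C α β γ s :=
    fun s => mul_pos hm0 (abs_pos.2 (hu_ne s))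
  -- derivative of cbar
  have hcbar' : ∀ s, HasDerivAt (cbar C α β) ((γ * u s) • C.t s + u s • C.n2 s) s := by
    intro s
    have H := ((C.deriv_c s).add ((C.frenet_n1 s).const_smul α)).add
      ((C.frenet_n3 s).const_smul β)
    have hv : C.t s + α • (C.k1 s • C.t s + C.k2 s • C.n2 s) + β • (-(C.k3 s) • C.n2 s)
        = (γ * u s) • C.t s + u s • C.n2 s := by
      funext i
      simp only [hu_def, Pi.add_apply, Pi.smul_apply, smul_eq_mul]
      linear_combination (-(C.t s i)) * (h2 s)
    exact hv ▸ H
  -- tbar explicitly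
  have htbarfun : tbar C α β γ = fun s => (ε / m) • (γ • C.t s + C.n2 s) := by
    funext s
    show (phip C α β γ s)⁻¹ • deriv (cbar C α β) s = _
    rw [(hcbar' s).deriv, hphip s]
    funext i
    simp only [Pi.add_apply, Pi.smul_apply, smul_eq_mul, habs2 s]
    have h0 := hu_ne s
    field_simp
    rcases hεcases with hε1 | hε1 <;> rw [hε1] <;> ring
  have htbar' : ∀ s, HasDerivAt (tbar C α β γ)
      ((ε * C.k3 s / m) • (δ • C.n1 s + C.n3 s)) s := by
    intro s
    rw [htbarfun]
    have H := (((C.frenet_t s).const_smul γ).add (C.frenet_n2 s)).const_smul (ε / m)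
    have hv : (ε / m) • (γ • (-(C.k1 s) • C.n1 s) + (C.k2 s • C.n1 s + C.k3 s • C.n3 s))
        = (ε * C.k3 s / m) • (δ • C.n1 s + C.n3 s) := by
      funext i
      simp only [Pi.add_apply, Pi.smul_apply, smul_eq_mul]
      linear_combination (-(ε / m * C.n1 s i)) * (h3 s)
    exact hv ▸ H
  have hderivt : ∀ s, deriv (tbar C α β γ) s
      = (ε * C.k3 s / m) • (δ • C.n1 s + C.n3 s) := fun s => (htbar' s).deriv
  have hgX : ∀ s, g4 (δ • C.n1 s + C.n3 s) (δ • C.n1 s + C.n3 s) = -(δ ^ 2) + 1 := by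
    intro s
    have := g4_expand δ 1 (C.n1 s) (C.n3 s)
    simp only [one_smul] at this
    rw [this, C.unit_n1 s, C.orth_n1_n3 s, C.unit_n3 s]; ring
  -- k1bar explicitly
  have hk1barval : ∀ s, k1bar C α β γ s = C.k3 s * d / (m * phip C α β γ s) := by
    intro s
    show nrm4 _ = _
    rw [hderivt s, smul_smul]
    unfold nrm4
    rw [g4_smul, hgX s]
    have habs : |((phip C α β γ s)⁻¹ * (ε * C.k3 s / m)) ^ 2 * (-(δ ^ 2) + 1)|
        = (((phip C α β γ s)⁻¹ * (C.k3 s / m)) * d) ^ 2 := by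
      rw [abs_mul, abs_of_nonneg (sq_nonneg _), abs_of_neg (by nlinarith : -(δ ^ 2) + 1 < 0)]
      rcases hεcases with hε1 | hε1 <;> rw [hε1] <;>
        linear_combination (-(((phip C α β γ s)⁻¹ * (C.k3 s / m)) ^ 2)) * hd2
    rw [habs, Real.sqrt_sq (mul_nonneg (mul_nonneg (inv_nonneg.2 (hphip_pos s).le)
      (div_nonneg (hk3 s).le hm0.le)) hd0.le)]
    field_simp
  -- n1bar explicitly
  have hn1barfun : n1bar C α β γ = fun s => (-(ε / d)) • (δ • C.n1 s + C.n3 s) := by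
    funext s
    show -((k1bar C α β γ s)⁻¹ • ((phip C α β γ s)⁻¹ • deriv (tbar C α β γ) s)) = _
    rw [hderivt s, hk1barval s]
    funext i
    simp only [Pi.neg_apply, Pi.add_apply, Pi.smul_apply, smul_eq_mul]
    have hφ := (hphip_pos s).ne'
    have hk3' := (hk3 s).ne'
    field_simp
  have hn1bar' : ∀ s, HasDerivAt (n1bar C α β γ)
      ((-(ε / d)) • ((δ * C.k1 s) • C.t s + (δ * C.k2 s - C.k3 s) • C.n2 s)) s := by
    intro s
    rw [hn1barfun]
    have H := (((C.frenet_n1 s).const_smul δ).add (C.frenet_n3 s)).const_smul (-(ε / d))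
    have hv : (-(ε / d)) • (δ • (C.k1 s • C.t s + C.k2 s • C.n2 s) + -(C.k3 s) • C.n2 s)
        = (-(ε / d)) • ((δ * C.k1 s) • C.t s + (δ * C.k2 s - C.k3 s) • C.n2 s) := by
      funext i
      simp only [Pi.add_apply, Pi.smul_apply, Pi.neg_apply, smul_eq_mul]
      ring
    exact hv ▸ H
  -- now fix s
  intro s
  set φ : ℝ := phip C α β γ s with hφ_def
  have hφ0 : 0 < φ := hphip_pos s
  set A : ℝ := -(ε / φ) * (δ * C.k1 s / d + γ * C.k3 s * d / m ^ 2) with hA_def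
  set B : ℝ := -(ε / φ) * ((δ * C.k2 s - C.k3 s) / d + C.k3 s * d / m ^ 2) with hB_def
  have hV : (phip C α β γ s)⁻¹ • deriv (n1bar C α β γ) s -
      k1bar C α β γ s • tbar C α β γ s = A • C.t s + B • C.n2 s := by
    rw [(hn1bar' s).deriv, hk1barval s, htbarfun]
    funext i
    simp only [Pi.sub_apply, Pi.add_apply, Pi.smul_apply, Pi.neg_apply, smul_eq_mul,
      hA_def, hB_def, ← hφ_def]
    have hk3' := (hk3 s).ne'
    field_simp
    ring
  have hgVV : g4 (A • C.t s + B • C.n2 s) (A • C.t s + B • C.n2 s)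
      = ((γ ^ 2 + 1) * C.k1 s * C.k2 s -
          γ * (C.k1 s ^ 2 + C.k2 s ^ 2 - C.k3 s ^ 2)) ^ 2 /
        (φ ^ 2 * ((γ ^ 2 - 1) * (δ ^ 2 - 1) * C.k3 s ^ 2)) := by
    rw [g4_expand, C.unit_t s, C.orth_t_n2 s, C.unit_n2 s]
    have hstep : A ^ 2 * (-1) + 2 * (A * B) * 0 + B ^ 2 * 1
        = (((δ * C.k2 s - C.k3 s) ^ 2 - (δ * C.k1 s) ^ 2) / (δ ^ 2 - 1)
          + 2 * C.k3 s * ((δ * C.k2 s - C.k3 s) - γ * (δ * C.k1 s)) / (γ ^ 2 - 1)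
          + (1 - γ ^ 2) * C.k3 s ^ 2 * (δ ^ 2 - 1) / ((γ ^ 2 - 1) ^ 2)) / φ ^ 2 := by
      rw [hA_def, hB_def, ← hm2, ← hd2]
      rcases hεcases with hε1 | hε1 <;> rw [hε1] <;> field_simp <;> ring
    rw [hstep, key_identity γ δ (C.k1 s) (C.k2 s) (C.k3 s) hγ1.ne' hδ1.ne' (hk3 s).ne'
      (by linarith [h3 s])]
    field_simp
  have hR : (γ ^ 2 - 1) * ((γ * C.k1 s - C.k2 s) ^ 2 - C.k3 s ^ 2)
      = (γ ^ 2 - 1) * (δ ^ 2 - 1) * C.k3 s ^ 2 := by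
    linear_combination ((γ ^ 2 - 1) * ((γ * C.k1 s - C.k2 s) - δ * C.k3 s)) * (h3 s)
  have hRpos : 0 < (γ ^ 2 - 1) * (δ ^ 2 - 1) * C.k3 s ^ 2 :=
    mul_pos (mul_pos hγ1 hδ1) (pow_pos (hk3 s) 2)
  set M : ℝ := (γ ^ 2 + 1) * C.k1 s * C.k2 s -
      γ * (C.k1 s ^ 2 + C.k2 s ^ 2 - C.k3 s ^ 2) with hM_def
  have hM0 : M ≠ 0 := h4 s
  have hnrm : nrm4 ((phip C α β γ s)⁻¹ • deriv (n1bar C α β γ) s -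
      k1bar C α β γ s • tbar C α β γ s)
      = |M| / (φ * Real.sqrt ((γ ^ 2 - 1) * (δ ^ 2 - 1) * C.k3 s ^ 2)) := by
    rw [hV]
    unfold nrm4
    rw [hgVV]
    rw [abs_of_nonneg (by positivity)]
    rw [show M ^ 2 / (φ ^ 2 * ((γ ^ 2 - 1) * (δ ^ 2 - 1) * C.k3 s ^ 2))
        = (|M| / (φ * Real.sqrt ((γ ^ 2 - 1) * (δ ^ 2 - 1) * C.k3 s ^ 2))) ^ 2 by
      rw [div_pow, mul_pow, sq_abs, Real.sq_sqrt hRpos.le]]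
    exact Real.sqrt_sq (by positivity)
  rw [hnrm, hR]
  exact ⟨rfl, div_pos (abs_pos.2 hM0) (mul_pos hφ0 (Real.sqrt_pos.2 hRpos))⟩
end
end
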